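/- The deterministic dynamic programming principle: for the value function V(t,x_t) = inf over measurable controls θ : [t,T] → U of ∫_t^T f(s, X^{t,x_t;θ}_s, θ(s)) ds + G(X^{t,x_t;θ}_T), and any t ≤ t̂ ≤ T, one has V(t,x_t) = inf_θ { ∫_t^{t̂} f(s, X^{t,x_t;θ}_s, θ(s)) ds + V(t̂, X^{t,x_t;θ}_{t̂}) }. -/

import Mathlib

open Set MeasureTheory

/-!
Concatenating an admissible control on `[t, t̂]` with an admissible control issued from
`(t̂, X_{t̂})` gives an admissible control issued from `(t, x)`: since drift and running cost are
non-anticipative, the concatenated trajectory is the old one up to `t̂` and the new one after, and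
its cost is the running cost on `[t, t̂]` plus the cost of the new control. Conversely, every
trajectory issued from `(t, x)` is, after `t̂`, a trajectory issued from `(t̂, X_{t̂})`. Since `f`
and `G` are bounded, all the cost sets are bounded below and these two facts compare the infima.
-/

lemma intervalIntegrable_of_norm_le {F : Type*} [NormedAddCommGroup F] {g : ℝ → F}
    {a b C : ℝ} (hg : AEStronglyMeasurable g) (hC : ∀ s ∈ uIoc a b, ‖g s‖ ≤ C) :
    IntervalIntegrable g volume a b :=
  intervalIntegrable_iff.2 <| IntegrableOn.of_bound measure_Ioc_lt_top hg.restrict C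
    (ae_restrict_of_forall_mem measurableSet_uIoc hC)

lemma neg_mul_sub_le_integral {g : ℝ → ℝ} {a b L : ℝ} (hab : a ≤ b)
    (hL : ∀ s ∈ Ioc a b, |g s| ≤ L) : -(L * (b - a)) ≤ ∫ s in a..b, g s := by
  have h := intervalIntegral.norm_integral_le_of_norm_le_const (a := a) (b := b) (f := g) (C := L)
    (by simpa only [uIoc_of_le hab, Real.norm_eq_abs] using hL)
  rw [Real.norm_eq_abs, abs_of_nonneg (sub_nonneg.2 hab)] at h
  linarith [neg_abs_le (∫ s in a..b, g s)]

lemma integral_piecewise_Iic_eq_right {V F : Type*} [NormedAddCommGroup F] [NormedSpace ℝ F]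
    (k : ℝ → V → F) (θ θ' : ℝ → V) {b τ : ℝ} (hbτ : b ≤ τ) :
    ∫ s in b..τ, k s ((Iic b).piecewise θ θ' s) = ∫ s in b..τ, k s (θ' s) :=
  intervalIntegral.integral_congr_ae <| .of_forall fun s hs => by
    rw [uIoc_of_le hbτ] at hs
    exact congrArg (k s) (piecewise_eq_of_notMem _ _ _ (not_le.2 hs.1))

namespace DeterministicControl

def Nonanticipating {E V F : Type*} [TopologicalSpace E] {T : ℝ} (U : Set V)
    (g : ℝ → C(Icc (0:ℝ) T, E) → V → F) : Prop :=
  ∀ s ∈ Icc (0:ℝ) T, ∀ v ∈ U, ∀ x y,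
    (∀ u : Icc (0:ℝ) T, (u:ℝ) ≤ s → x u = y u) → g s x v = g s y v

lemma Nonanticipating.integral_piecewise_Iic_eq_left {E V F : Type*} [TopologicalSpace E]
    [NormedAddCommGroup F] [NormedSpace ℝ F] {T : ℝ} {U : Set V}
    {g : ℝ → C(Icc (0:ℝ) T, E) → V → F} {θ θ' : ℝ → V}
    (hna : Nonanticipating U g)
    (hθ : ∀ s, θ s ∈ U) {X X' : C(Icc (0:ℝ) T, E)} {b : ℝ}
    (hXX' : ∀ u : Icc (0:ℝ) T, (u:ℝ) ≤ b → X' u = X u)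
    {a τ : ℝ} (ha : 0 ≤ a) (haτ : a ≤ τ) (hτb : τ ≤ b) (hb : b ≤ T) :
    ∫ s in a..τ, g s X' ((Iic b).piecewise θ θ' s) = ∫ s in a..τ, g s X (θ s) := by
  refine intervalIntegral.integral_congr fun s hs => ?_
  rw [uIcc_of_le haτ] at hs
  have hsb : s ≤ b := hs.2.trans hτb
  rw [piecewise_eq_of_mem _ _ _ (show s ∈ Iic b from hsb)]
  exact hna s ⟨ha.trans hs.1, hsb.trans hb⟩ _ (hθ s) X' X fun u hu => hXX' u (hu.trans hsb)

variable {E V F P : Type*} [MeasurableSpace V] [NormedAddCommGroup F] {T L : ℝ}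

def IsAdmissible (U : Set V) (θ : ℝ → V) : Prop :=
  Measurable θ ∧ ∀ s, θ s ∈ U

section Admissible

variable {U : Set V} {θ θ' : ℝ → V} {g : ℝ → P → V → F}

lemma IsAdmissible.piecewise (hθ : IsAdmissible U θ) (hθ' : IsAdmissible U θ') (b : ℝ) :
    IsAdmissible U ((Iic b).piecewise θ θ') :=
  ⟨hθ.1.piecewise measurableSet_Iic hθ'.1, fun s => by
    by_cases hs : s ∈ Iic b
    · rw [piecewise_eq_of_mem _ _ _ hs]; exact hθ.2 s
    · rw [piecewise_eq_of_notMem _ _ _ hs]; exact hθ'.2 s⟩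

lemma IsAdmissible.intervalIntegrable [MeasurableSpace F] [OpensMeasurableSpace F]
    [SecondCountableTopology F]
    (hmeas : ∀ x (θ : ℝ → V), Measurable θ → Measurable fun s => g s x (θ s))
    (hbd : ∀ s ∈ Icc (0:ℝ) T, ∀ x, ∀ v ∈ U, ‖g s x v‖ ≤ L) (hθ : IsAdmissible U θ)
    (X : P) {a b : ℝ} (ha : a ∈ Icc 0 T) (hb : b ∈ Icc 0 T) :
    IntervalIntegrable (fun s => g s X (θ s)) volume a b :=
  intervalIntegrable_of_norm_le (hmeas X θ hθ.1).aestronglyMeasurable fun s hs =>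
    hbd s (uIcc_subset_Icc ha hb (uIoc_subset_uIcc hs)) X (θ s) (hθ.2 s)

variable [NormedSpace ℝ F]

lemma IsAdmissible.integral_add_adjacent [MeasurableSpace F] [OpensMeasurableSpace F]
    [SecondCountableTopology F]
    (hmeas : ∀ x (θ : ℝ → V), Measurable θ → Measurable fun s => g s x (θ s))
    (hbd : ∀ s ∈ Icc (0:ℝ) T, ∀ x, ∀ v ∈ U, ‖g s x v‖ ≤ L) (hθ : IsAdmissible U θ)
    (X : P) {a b c : ℝ} (ha : a ∈ Icc 0 T) (hb : b ∈ Icc 0 T)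
    (hc : c ∈ Icc 0 T) :
    (∫ s in a..b, g s X (θ s)) + ∫ s in b..c, g s X (θ s) = ∫ s in a..c, g s X (θ s) :=
  intervalIntegral.integral_add_adjacent_intervals (hθ.intervalIntegrable hmeas hbd X ha hb)
    (hθ.intervalIntegrable hmeas hbd X hb hc)

end Admissible

lemma integral_piecewise_eq_add [TopologicalSpace E] [NormedSpace ℝ F] [MeasurableSpace F]
    [OpensMeasurableSpace F] [SecondCountableTopology F] {U : Set V} {θ θ' : ℝ → V}
    {g : ℝ → C(Icc (0:ℝ) T, E) → V → F}
    (hmeas : ∀ x (θ : ℝ → V), Measurable θ → Measurable fun s => g s x (θ s))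
    (hbd : ∀ s ∈ Icc (0:ℝ) T, ∀ x, ∀ v ∈ U, ‖g s x v‖ ≤ L)
    (hna : Nonanticipating U g)
    (hθ : IsAdmissible U θ) (hθ' : IsAdmissible U θ') {X X' : C(Icc (0:ℝ) T, E)} {b : ℝ}
    (hXX' : ∀ u : Icc (0:ℝ) T, (u:ℝ) ≤ b → X' u = X u)
    {a τ : ℝ} (ha : a ∈ Icc 0 T) (hab : a ≤ b) (hbτ : b ≤ τ) (hτ : τ ≤ T) :
    ∫ s in a..τ, g s X' ((Iic b).piecewise θ θ' s) =
      (∫ s in a..b, g s X (θ s)) + ∫ s in b..τ, g s X' (θ' s) := by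
  have hb : b ∈ Icc 0 T := ⟨ha.1.trans hab, hbτ.trans hτ⟩
  rw [← (hθ.piecewise hθ' b).integral_add_adjacent hmeas hbd X' ha hb ⟨hb.1.trans hbτ, hτ⟩,
    hna.integral_piecewise_Iic_eq_left hθ.2 hXX' ha.1 hab le_rfl hb.2,
    integral_piecewise_Iic_eq_right (g · X') θ θ' hbτ]

variable [NormedAddCommGroup E] [NormedSpace ℝ E]

def IsTrajectory (β : ℝ → C(Icc (0:ℝ) T, E) → V → E) (a : Icc (0:ℝ) T) (y : C(Icc (0:ℝ) T, E))
    (θ : ℝ → V) (X : C(Icc (0:ℝ) T, E)) : Prop :=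
  (∀ u : Icc (0:ℝ) T, (u:ℝ) ≤ a → X u = y u) ∧
    ∀ τ : Icc (0:ℝ) T, (a:ℝ) ≤ τ → X τ = y a + ∫ s in (a:ℝ)..τ, β s X (θ s)

def costSet (U : Set V) (β : ℝ → C(Icc (0:ℝ) T, E) → V → E)
    (f : ℝ → C(Icc (0:ℝ) T, E) → V → ℝ) (G : C(Icc (0:ℝ) T, E) → ℝ)
    (a : Icc (0:ℝ) T) (y : C(Icc (0:ℝ) T, E)) : Set ℝ :=
  {c | ∃ θ X, IsAdmissible U θ ∧ IsTrajectory β a y θ X ∧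
    c = (∫ s in (a:ℝ)..T, f s X (θ s)) + G X}

-- `sInf ∅ = 0`: nothing guarantees that a trajectory exists, so `costSet` may be empty.
noncomputable def value (U : Set V) (β : ℝ → C(Icc (0:ℝ) T, E) → V → E)
    (f : ℝ → C(Icc (0:ℝ) T, E) → V → ℝ) (G : C(Icc (0:ℝ) T, E) → ℝ)
    (a : Icc (0:ℝ) T) (y : C(Icc (0:ℝ) T, E)) : ℝ :=
  sInf (costSet U β f G a y)

def dppSet (U : Set V) (β : ℝ → C(Icc (0:ℝ) T, E) → V → E)
    (f : ℝ → C(Icc (0:ℝ) T, E) → V → ℝ) (G : C(Icc (0:ℝ) T, E) → ℝ)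
    (a : Icc (0:ℝ) T) (y : C(Icc (0:ℝ) T, E)) (b : Icc (0:ℝ) T) : Set ℝ :=
  {c | ∃ θ X, IsAdmissible U θ ∧ IsTrajectory β a y θ X ∧
    c = (∫ s in (a:ℝ)..b, f s X (θ s)) + value U β f G b X}

section Trajectories

variable {U : Set V} {β : ℝ → C(Icc (0:ℝ) T, E) → V → E} {f : ℝ → C(Icc (0:ℝ) T, E) → V → ℝ}
  {G : C(Icc (0:ℝ) T, E) → ℝ} {θ θ' : ℝ → V} {t tt : Icc (0:ℝ) T} {x X X' : C(Icc (0:ℝ) T, E)}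

lemma dppSet_nonempty_iff :
    (dppSet U β f G t x tt).Nonempty ↔ (costSet U β f G t x).Nonempty :=
  ⟨fun ⟨_, θ, X, hθ, hX, _⟩ => ⟨_, θ, X, hθ, hX, rfl⟩,
    fun ⟨_, θ, X, hθ, hX, _⟩ => ⟨_, θ, X, hθ, hX, rfl⟩⟩

lemma costSet_lowerBound (hfbd : ∀ s ∈ Icc (0:ℝ) T, ∀ x, ∀ v ∈ U, |f s x v| ≤ L)
    (hGbd : ∀ x, |G x| ≤ L) (t : Icc (0:ℝ) T) (x : C(Icc (0:ℝ) T, E)) :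
    -(L * (T - t)) - L ∈ lowerBounds (costSet U β f G t x) := by
  rintro _ ⟨θ, X, hθ, -, rfl⟩
  have hf := neg_mul_sub_le_integral t.2.2 fun s hs =>
    hfbd s ⟨t.2.1.trans hs.1.le, hs.2⟩ X (θ s) (hθ.2 s)
  linarith [(abs_le.1 (hGbd X)).1]

variable [MeasurableSpace E] [OpensMeasurableSpace E] [SecondCountableTopology E]

lemma IsTrajectory.restrict
    (hβmeas : ∀ x (θ : ℝ → V), Measurable θ → Measurable fun s => β s x (θ s))
    (hβbd : ∀ s ∈ Icc (0:ℝ) T, ∀ x, ∀ v ∈ U, ‖β s x v‖ ≤ L) (hθ : IsAdmissible U θ)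
    (hX : IsTrajectory β t x θ X) (htt : (t:ℝ) ≤ tt) : IsTrajectory β tt X θ X := by
  refine ⟨fun _ _ => rfl, fun τ hτ => ?_⟩
  rw [hX.2 τ (htt.trans hτ), hX.2 tt htt, add_assoc,
    hθ.integral_add_adjacent hβmeas hβbd X t.2 tt.2 τ.2]

lemma IsTrajectory.piecewise
    (hβmeas : ∀ x (θ : ℝ → V), Measurable θ → Measurable fun s => β s x (θ s))
    (hβbd : ∀ s ∈ Icc (0:ℝ) T, ∀ x, ∀ v ∈ U, ‖β s x v‖ ≤ L)
    (hβna : Nonanticipating U β)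
    (hθ : IsAdmissible U θ) (hθ' : IsAdmissible U θ') (hX : IsTrajectory β t x θ X)
    (hX' : IsTrajectory β tt X θ' X') (htt : (t:ℝ) ≤ tt) :
    IsTrajectory β t x ((Iic (tt:ℝ)).piecewise θ θ') X' := by
  refine ⟨fun u hu => (hX'.1 u (hu.trans htt)).trans (hX.1 u hu), fun τ hτ => ?_⟩
  rcases le_total (τ:ℝ) tt with hτtt | httτ
  · rw [hX'.1 τ hτtt, hX.2 τ hτ,
      hβna.integral_piecewise_Iic_eq_left hθ.2 hX'.1 t.2.1 hτ hτtt tt.2.2]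
  · rw [hX'.2 τ httτ, hX.2 tt htt,
      integral_piecewise_eq_add hβmeas hβbd hβna hθ hθ' hX'.1 t.2 htt httτ τ.2.2, add_assoc]

lemma integral_add_mem_costSet
    (hβmeas : ∀ x (θ : ℝ → V), Measurable θ → Measurable fun s => β s x (θ s))
    (hfmeas : ∀ x (θ : ℝ → V), Measurable θ → Measurable fun s => f s x (θ s))
    (hβna : Nonanticipating U β) (hfna : Nonanticipating U f)
    (hβbd : ∀ s ∈ Icc (0:ℝ) T, ∀ x, ∀ v ∈ U, ‖β s x v‖ ≤ L)
    (hfbd : ∀ s ∈ Icc (0:ℝ) T, ∀ x, ∀ v ∈ U, |f s x v| ≤ L)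
    (hθ : IsAdmissible U θ) (hX : IsTrajectory β t x θ X) (htt : (t:ℝ) ≤ tt) {c : ℝ}
    (hc : c ∈ costSet U β f G tt X) :
    (∫ s in (t:ℝ)..tt, f s X (θ s)) + c ∈ costSet U β f G t x := by
  obtain ⟨θ', X', hθ', hX', rfl⟩ := hc
  refine ⟨_, X', hθ.piecewise hθ' tt, hX.piecewise hβmeas hβbd hβna hθ hθ' hX' htt, ?_⟩
  rw [integral_piecewise_eq_add hfmeas (by simpa only [Real.norm_eq_abs] using hfbd) hfna
    hθ hθ' hX'.1 t.2 htt tt.2.2 le_rfl, add_assoc]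

lemma value_le_integral_add_value
    (hβmeas : ∀ x (θ : ℝ → V), Measurable θ → Measurable fun s => β s x (θ s))
    (hfmeas : ∀ x (θ : ℝ → V), Measurable θ → Measurable fun s => f s x (θ s))
    (hβna : Nonanticipating U β) (hfna : Nonanticipating U f)
    (hβbd : ∀ s ∈ Icc (0:ℝ) T, ∀ x, ∀ v ∈ U, ‖β s x v‖ ≤ L)
    (hfbd : ∀ s ∈ Icc (0:ℝ) T, ∀ x, ∀ v ∈ U, |f s x v| ≤ L) (hGbd : ∀ x, |G x| ≤ L)
    (hθ : IsAdmissible U θ) (hX : IsTrajectory β t x θ X) (htt : (t:ℝ) ≤ tt) :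
    value U β f G t x ≤ (∫ s in (t:ℝ)..tt, f s X (θ s)) + value U β f G tt X := by
  have hne : (costSet U β f G tt X).Nonempty :=
    ⟨_, θ, X, hθ, hX.restrict hβmeas hβbd hθ htt, rfl⟩
  rw [← sub_le_iff_le_add']
  refine le_csInf hne fun c hc => sub_le_iff_le_add'.2 ?_
  exact csInf_le ⟨_, costSet_lowerBound hfbd hGbd t x⟩
    (integral_add_mem_costSet hβmeas hfmeas hβna hfna hβbd hfbd hθ hX htt hc)

lemma integral_add_value_le_cost
    (hβmeas : ∀ x (θ : ℝ → V), Measurable θ → Measurable fun s => β s x (θ s))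
    (hfmeas : ∀ x (θ : ℝ → V), Measurable θ → Measurable fun s => f s x (θ s))
    (hβbd : ∀ s ∈ Icc (0:ℝ) T, ∀ x, ∀ v ∈ U, ‖β s x v‖ ≤ L)
    (hfbd : ∀ s ∈ Icc (0:ℝ) T, ∀ x, ∀ v ∈ U, |f s x v| ≤ L) (hGbd : ∀ x, |G x| ≤ L)
    (hθ : IsAdmissible U θ) (hX : IsTrajectory β t x θ X) (htt : (t:ℝ) ≤ tt) :
    (∫ s in (t:ℝ)..tt, f s X (θ s)) + value U β f G tt X ≤
      (∫ s in (t:ℝ)..T, f s X (θ s)) + G X := by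
  rw [← hθ.integral_add_adjacent hfmeas (by simpa only [Real.norm_eq_abs] using hfbd) X t.2 tt.2
    ⟨t.2.1.trans t.2.2, le_rfl⟩, add_assoc]
  gcongr
  exact csInf_le ⟨_, costSet_lowerBound hfbd hGbd tt X⟩
    ⟨θ, X, hθ, hX.restrict hβmeas hβbd hθ htt, rfl⟩

lemma dppSet_lowerBound
    (hβmeas : ∀ x (θ : ℝ → V), Measurable θ → Measurable fun s => β s x (θ s))
    (hβbd : ∀ s ∈ Icc (0:ℝ) T, ∀ x, ∀ v ∈ U, ‖β s x v‖ ≤ L)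
    (hfbd : ∀ s ∈ Icc (0:ℝ) T, ∀ x, ∀ v ∈ U, |f s x v| ≤ L) (hGbd : ∀ x, |G x| ≤ L)
    (htt : (t:ℝ) ≤ tt) :
    -(L * (T - t)) - L ∈ lowerBounds (dppSet U β f G t x tt) := by
  rintro _ ⟨θ, X, hθ, hX, rfl⟩
  have hrun := neg_mul_sub_le_integral htt fun s hs =>
    hfbd s ⟨t.2.1.trans hs.1.le, hs.2.trans tt.2.2⟩ X (θ s) (hθ.2 s)
  have hval : -(L * (T - tt)) - L ≤ value U β f G tt X :=
    le_csInf ⟨_, θ, X, hθ, hX.restrict hβmeas hβbd hθ htt, rfl⟩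
      (costSet_lowerBound hfbd hGbd tt X)
  linarith

theorem value_eq_sInf_dppSet
    (hβmeas : ∀ x (θ : ℝ → V), Measurable θ → Measurable fun s => β s x (θ s))
    (hfmeas : ∀ x (θ : ℝ → V), Measurable θ → Measurable fun s => f s x (θ s))
    (hβna : Nonanticipating U β) (hfna : Nonanticipating U f)
    (hβbd : ∀ s ∈ Icc (0:ℝ) T, ∀ x, ∀ v ∈ U, ‖β s x v‖ ≤ L)
    (hfbd : ∀ s ∈ Icc (0:ℝ) T, ∀ x, ∀ v ∈ U, |f s x v| ≤ L) (hGbd : ∀ x, |G x| ≤ L)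
    (htt : (t:ℝ) ≤ tt) :
    value U β f G t x = sInf (dppSet U β f G t x tt) := by
  rcases (costSet U β f G t x).eq_empty_or_nonempty with hempty | hne
  · rw [value, hempty, not_nonempty_iff_eq_empty.1 (dppSet_nonempty_iff.not.2
      (not_nonempty_iff_eq_empty.2 hempty))]
  refine le_antisymm (le_csInf (dppSet_nonempty_iff.2 hne) ?_) (le_csInf hne ?_)
  · rintro _ ⟨θ, X, hθ, hX, rfl⟩
    exact value_le_integral_add_value hβmeas hfmeas hβna hfna hβbd hfbd hGbd hθ hX htt
  · rintro _ ⟨θ, X, hθ, hX, rfl⟩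
    exact (csInf_le ⟨_, dppSet_lowerBound hβmeas hβbd hfbd hGbd htt⟩ ⟨θ, X, hθ, hX, rfl⟩).trans
      (integral_add_value_le_cost hβmeas hfmeas hβbd hfbd hGbd hθ hX htt)

end Trajectories

end DeterministicControl

theorem stmt_14_general (T L : ℝ) (d m : ℕ)
    (U : Set (EuclideanSpace ℝ (Fin m)))
    (β : ℝ → C(Set.Icc (0:ℝ) T, EuclideanSpace ℝ (Fin d)) → EuclideanSpace ℝ (Fin m) →
      EuclideanSpace ℝ (Fin d))
    (f : ℝ → C(Set.Icc (0:ℝ) T, EuclideanSpace ℝ (Fin d)) → EuclideanSpace ℝ (Fin m) → ℝ)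
    (G : C(Set.Icc (0:ℝ) T, EuclideanSpace ℝ (Fin d)) → ℝ)
    (hβmeas : ∀ x (θ : ℝ → EuclideanSpace ℝ (Fin m)), Measurable θ →
      Measurable fun s => β s x (θ s))
    (hfmeas : ∀ x (θ : ℝ → EuclideanSpace ℝ (Fin m)), Measurable θ →
      Measurable fun s => f s x (θ s))
    (hβna : ∀ s ∈ Set.Icc (0:ℝ) T, ∀ v ∈ U, ∀ x y,
      (∀ u : Set.Icc (0:ℝ) T, (u:ℝ) ≤ s → x u = y u) → β s x v = β s y v)
    (hfna : ∀ s ∈ Set.Icc (0:ℝ) T, ∀ v ∈ U, ∀ x y,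
      (∀ u : Set.Icc (0:ℝ) T, (u:ℝ) ≤ s → x u = y u) → f s x v = f s y v)
    (hβbd : ∀ s ∈ Set.Icc (0:ℝ) T, ∀ x, ∀ v ∈ U, ‖β s x v‖ ≤ L)
    (hfbd : ∀ s ∈ Set.Icc (0:ℝ) T, ∀ x, ∀ v ∈ U, |f s x v| ≤ L)
    (hGbd : ∀ x, |G x| ≤ L) :
    ∀ (t : Set.Icc (0:ℝ) T) (x : C(Set.Icc (0:ℝ) T, EuclideanSpace ℝ (Fin d)))
      (tt : Set.Icc (0:ℝ) T), t ≤ tt →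
      sInf {c : ℝ | ∃ (θ : ℝ → EuclideanSpace ℝ (Fin m))
          (X : C(Set.Icc (0:ℝ) T, EuclideanSpace ℝ (Fin d))),
          (Measurable θ ∧ ∀ s, θ s ∈ U) ∧
          ((∀ u : Set.Icc (0:ℝ) T, (u:ℝ) ≤ (t:ℝ) → X u = x u) ∧
            ∀ τ : Set.Icc (0:ℝ) T, (t:ℝ) ≤ (τ:ℝ) →
              X τ = x t + ∫ s' in (t:ℝ)..(τ:ℝ), β s' X (θ s')) ∧
          c = (∫ s' in (t:ℝ)..T, f s' X (θ s')) + G X} =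
      sInf {c : ℝ | ∃ (θ : ℝ → EuclideanSpace ℝ (Fin m))
          (X : C(Set.Icc (0:ℝ) T, EuclideanSpace ℝ (Fin d))),
          (Measurable θ ∧ ∀ s, θ s ∈ U) ∧
          ((∀ u : Set.Icc (0:ℝ) T, (u:ℝ) ≤ (t:ℝ) → X u = x u) ∧
            ∀ τ : Set.Icc (0:ℝ) T, (t:ℝ) ≤ (τ:ℝ) →
              X τ = x t + ∫ s' in (t:ℝ)..(τ:ℝ), β s' X (θ s')) ∧
          c = (∫ s' in (t:ℝ)..(tt:ℝ), f s' X (θ s')) +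
            sInf {c' : ℝ | ∃ (θ' : ℝ → EuclideanSpace ℝ (Fin m))
                (X' : C(Set.Icc (0:ℝ) T, EuclideanSpace ℝ (Fin d))),
                (Measurable θ' ∧ ∀ s, θ' s ∈ U) ∧
                ((∀ u : Set.Icc (0:ℝ) T, (u:ℝ) ≤ (tt:ℝ) → X' u = X u) ∧
                  ∀ τ : Set.Icc (0:ℝ) T, (tt:ℝ) ≤ (τ:ℝ) →
                    X' τ = X tt + ∫ s' in (tt:ℝ)..(τ:ℝ), β s' X' (θ' s')) ∧
                c' = (∫ s' in (tt:ℝ)..T, f s' X' (θ' s')) + G X'}} := by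
  intro t x tt htt
  exact DeterministicControl.value_eq_sInf_dppSet hβmeas hfmeas hβna hfna hβbd hfbd hGbd htt

/-- the deterministic dynamic programming principle.  For the value
function `V(t,x_t) = inf_θ { ∫_t^T f(s, X^{t,x_t;θ}_s, θ(s)) ds + G(X^{t,x_t;θ}_T) }`
over measurable `U`-valued controls, and any `t ≤ t̂ ≤ T`,
`V(t,x_t) = inf_θ { ∫_t^{t̂} f(s, X^{t,x_t;θ}_s, θ(s)) ds + V(t̂, X^{t,x_t;θ}_{t̂}) }`. -/
theorem stmt_14 (T L : ℝ) (hT : 0 < T) (hL : 0 < L) (d m : ℕ)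
    (U : Set (EuclideanSpace ℝ (Fin m))) (hU : U.Nonempty)
    (β : ℝ → C(Set.Icc (0:ℝ) T, EuclideanSpace ℝ (Fin d)) → EuclideanSpace ℝ (Fin m) →
      EuclideanSpace ℝ (Fin d))
    (f : ℝ → C(Set.Icc (0:ℝ) T, EuclideanSpace ℝ (Fin d)) → EuclideanSpace ℝ (Fin m) → ℝ)
    (G : C(Set.Icc (0:ℝ) T, EuclideanSpace ℝ (Fin d)) → ℝ)
    (hβmeas : ∀ x (θ : ℝ → EuclideanSpace ℝ (Fin m)), Measurable θ →
      Measurable fun s => β s x (θ s))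
    (hfmeas : ∀ x (θ : ℝ → EuclideanSpace ℝ (Fin m)), Measurable θ →
      Measurable fun s => f s x (θ s))
    (hβna : ∀ s ∈ Set.Icc (0:ℝ) T, ∀ v ∈ U, ∀ x y,
      (∀ u : Set.Icc (0:ℝ) T, (u:ℝ) ≤ s → x u = y u) → β s x v = β s y v)
    (hfna : ∀ s ∈ Set.Icc (0:ℝ) T, ∀ v ∈ U, ∀ x y,
      (∀ u : Set.Icc (0:ℝ) T, (u:ℝ) ≤ s → x u = y u) → f s x v = f s y v)
    (hβbd : ∀ s ∈ Set.Icc (0:ℝ) T, ∀ x, ∀ v ∈ U, ‖β s x v‖ ≤ L)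
    (hfbd : ∀ s ∈ Set.Icc (0:ℝ) T, ∀ x, ∀ v ∈ U, |f s x v| ≤ L)
    (hβlip : ∀ s ∈ Set.Icc (0:ℝ) T, ∀ v ∈ U, ∀ x y,
      ‖β s x v - β s y v‖ ≤ L * ⨆ u : {u : Set.Icc (0:ℝ) T // (u:ℝ) ≤ s}, ‖x u.1 - y u.1‖)
    (hflip : ∀ s ∈ Set.Icc (0:ℝ) T, ∀ v ∈ U, ∀ x y,
      |f s x v - f s y v| ≤ L * ⨆ u : {u : Set.Icc (0:ℝ) T // (u:ℝ) ≤ s}, ‖x u.1 - y u.1‖)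
    (hGbd : ∀ x, |G x| ≤ L)
    (hGlip : ∀ x y, |G x - G y| ≤ L * ‖x - y‖) :
    ∀ (t : Set.Icc (0:ℝ) T) (x : C(Set.Icc (0:ℝ) T, EuclideanSpace ℝ (Fin d)))
      (tt : Set.Icc (0:ℝ) T), t ≤ tt →
      sInf {c : ℝ | ∃ (θ : ℝ → EuclideanSpace ℝ (Fin m))
          (X : C(Set.Icc (0:ℝ) T, EuclideanSpace ℝ (Fin d))),
          (Measurable θ ∧ ∀ s, θ s ∈ U) ∧
          ((∀ u : Set.Icc (0:ℝ) T, (u:ℝ) ≤ (t:ℝ) → X u = x u) ∧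
            ∀ τ : Set.Icc (0:ℝ) T, (t:ℝ) ≤ (τ:ℝ) →
              X τ = x t + ∫ s' in (t:ℝ)..(τ:ℝ), β s' X (θ s')) ∧
          c = (∫ s' in (t:ℝ)..T, f s' X (θ s')) + G X} =
      sInf {c : ℝ | ∃ (θ : ℝ → EuclideanSpace ℝ (Fin m))
          (X : C(Set.Icc (0:ℝ) T, EuclideanSpace ℝ (Fin d))),
          (Measurable θ ∧ ∀ s, θ s ∈ U) ∧
          ((∀ u : Set.Icc (0:ℝ) T, (u:ℝ) ≤ (t:ℝ) → X u = x u) ∧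
            ∀ τ : Set.Icc (0:ℝ) T, (t:ℝ) ≤ (τ:ℝ) →
              X τ = x t + ∫ s' in (t:ℝ)..(τ:ℝ), β s' X (θ s')) ∧
          c = (∫ s' in (t:ℝ)..(tt:ℝ), f s' X (θ s')) +
            sInf {c' : ℝ | ∃ (θ' : ℝ → EuclideanSpace ℝ (Fin m))
                (X' : C(Set.Icc (0:ℝ) T, EuclideanSpace ℝ (Fin d))),
                (Measurable θ' ∧ ∀ s, θ' s ∈ U) ∧
                ((∀ u : Set.Icc (0:ℝ) T, (u:ℝ) ≤ (tt:ℝ) → X' u = X u) ∧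
                  ∀ τ : Set.Icc (0:ℝ) T, (tt:ℝ) ≤ (τ:ℝ) →
                    X' τ = X tt + ∫ s' in (tt:ℝ)..(τ:ℝ), β s' X' (θ' s')) ∧
                c' = (∫ s' in (tt:ℝ)..T, f s' X' (θ' s')) + G X'}} :=
  stmt_14_general T L d m U β f G hβmeas hfmeas hβna hfna hβbd hfbd hGbd
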